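/- The function ψ(l,t) = exp(i l y₀ e^{g₂ t/ε} - i l ε^γ (g₁/g₂)(1 - e^{g₂ t/ε}) - (b^α |l|^α / (ε^{(1-γ)α-1}(-α g₂))) Ξ(l)(1 - e^{α g₂ t/ε})) satisfies the PDE ∂ψ/∂t = (g₂ l/ε) ∂ψ/∂l + (i g₁ l ε^{γ-1} - b^α |l|^α ε^{-(1-γ)α} Ξ(l)) ψ with initial condition ψ(l,0) = exp(i l y₀), for all l ≠ 0. -/

import Mathlib

open Complex Real

/-- The α-stable skewness factor Ξ(l;α,β) = 1 + iβ·sgn(l)·tan(πα/2). -/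
noncomputable def Xi (α β l : ℝ) : ℂ :=
  1 + Complex.I * (β : ℂ) * (Real.sign l : ℂ) * (Real.tan (Real.pi * α / 2) : ℂ)

/-- The explicit solution of the Fourier-transformed forward Kolmogorov equation
for the linear Lévy-driven Ornstein–Uhlenbeck process. -/
noncomputable def psi (g₁ g₂ b y₀ ε γ α β : ℝ) (l t : ℝ) : ℂ :=
  Complex.exp (Complex.I * (l : ℂ) * (y₀ : ℂ) * (Real.exp (g₂ * t / ε) : ℂ)
    - Complex.I * (l : ℂ) * ((ε ^ γ * (g₁ / g₂) : ℝ) : ℂ)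
        * (1 - (Real.exp (g₂ * t / ε) : ℂ))
    - ((b ^ α * |l| ^ α / (ε ^ ((1 - γ) * α - 1) * (-α * g₂)) : ℝ) : ℂ)
        * Xi α β l * (1 - (Real.exp (α * g₂ * t / ε) : ℂ)))

/-! Write ψ = exp φ. Away from l = 0 the factor Ξ is locally constant and |l|^α obeys Euler's
relation l ∂ₗ|l|^α = α|l|^α, so l ∂ₗ multiplies the drift terms of φ by 1 and the jump term by α,
while ∂ₜ multiplies the parts carrying e^{g₂t/ε} and e^{αg₂t/ε} by g₂/ε and αg₂/ε. Hence
∂ₜφ - (g₂l/ε) ∂ₗφ is minus the t-independent part of φ scaled by those same factors, which after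
simplifying the powers of ε is the potential i g₁ l ε^{γ-1} - b^α|l|^α ε^{-(1-γ)α} Ξ(l). -/

open Filter Topology

theorem hasDerivAt_abs_rpow_of_ne_zero {x : ℝ} (hx : x ≠ 0) (p : ℝ) :
    HasDerivAt (fun y => |y| ^ p) (p * |x| ^ p / x) x := by
  convert (hasDerivAt_abs hx).rpow_const (p := p) (Or.inl (abs_ne_zero.2 hx)) using 1
  rw [rpow_sub_one (abs_ne_zero.2 hx)]
  rcases hx.lt_or_gt with h | h
  · simp only [abs_of_neg h, h, _root_.sign_neg, SignType.coe_neg, SignType.coe_one, neg_mul,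
      one_mul]
    field_simp
  · simp only [abs_of_pos h, h, sign_pos, SignType.coe_one, one_mul]
    ring

theorem Real.sign_eventuallyEq {x : ℝ} (hx : x ≠ 0) :
    Real.sign =ᶠ[𝓝 x] fun _ => Real.sign x := by
  rcases hx.lt_or_gt with h | h
  · filter_upwards [eventually_lt_nhds h] with y hy
    rw [Real.sign_of_neg hy, Real.sign_of_neg h]
  · filter_upwards [eventually_gt_nhds h] with y hy
    rw [Real.sign_of_pos hy, Real.sign_of_pos h]

theorem Xi_eventuallyEq (α β : ℝ) {l : ℝ} (hl : l ≠ 0) : Xi α β =ᶠ[𝓝 l] fun _ => Xi α β l :=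
  (Real.sign_eventuallyEq hl).mono fun x hx => by simp only [Xi, hx]

theorem hasDerivAt_ofReal_exp_mul_div (c ε t : ℝ) :
    HasDerivAt (fun s : ℝ => ((Real.exp (c * s / ε) : ℝ) : ℂ))
      ((c / ε * Real.exp (c * t / ε) : ℝ) : ℂ) t :=
  (((hasDerivAt_id' t).const_mul c).div_const ε).exp.ofReal_comp.congr_deriv (by congr 1; ring)

section

variable (g₁ g₂ b y₀ ε γ α β : ℝ)

theorem hasDerivAt_psi_time (l t : ℝ) :
    HasDerivAt (fun s => psi g₁ g₂ b y₀ ε γ α β l s)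
      ((Complex.I * l * ((y₀ + ε ^ γ * (g₁ / g₂) : ℝ) : ℂ)
            * ((g₂ / ε * Real.exp (g₂ * t / ε) : ℝ) : ℂ)
          + ((b ^ α * |l| ^ α / (ε ^ ((1 - γ) * α - 1) * (-α * g₂)) : ℝ) : ℂ) * Xi α β l
            * ((α * g₂ / ε * Real.exp (α * g₂ * t / ε) : ℝ) : ℂ))
        * psi g₁ g₂ b y₀ ε γ α β l t) t := by
  have hE := hasDerivAt_ofReal_exp_mul_div g₂ ε t
  have hF := hasDerivAt_ofReal_exp_mul_div (α * g₂) ε t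
  refine HasDerivAt.congr_deriv (f := fun s => psi g₁ g₂ b y₀ ε γ α β l s)
    (((hE.const_mul (Complex.I * l * y₀)).sub
      ((hE.const_sub 1).const_mul (Complex.I * l * ((ε ^ γ * (g₁ / g₂) : ℝ) : ℂ)))).sub
      ((hF.const_sub 1).const_mul
        (((b ^ α * |l| ^ α / (ε ^ ((1 - γ) * α - 1) * (-α * g₂)) : ℝ) : ℂ) * Xi α β l))).cexp ?_
  simp only [psi, Pi.sub_apply]
  push_cast
  ring

theorem hasDerivAt_psi_space {l : ℝ} (hl : l ≠ 0) (t : ℝ) :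
    HasDerivAt (fun l' => psi g₁ g₂ b y₀ ε γ α β l' t)
      ((Complex.I * ((y₀ + ε ^ γ * (g₁ / g₂)) * Real.exp (g₂ * t / ε) : ℝ)
          - Complex.I * ((ε ^ γ * (g₁ / g₂) : ℝ) : ℂ)
          - ((α * (b ^ α * |l| ^ α / (ε ^ ((1 - γ) * α - 1) * (-α * g₂))) / l : ℝ) : ℂ)
            * Xi α β l * (1 - (Real.exp (α * g₂ * t / ε) : ℂ)))
        * psi g₁ g₂ b y₀ ε γ α β l t) l := by
  have hD := (((hasDerivAt_abs_rpow_of_ne_zero hl α).const_mul (b ^ α)).div_const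
    (ε ^ ((1 - γ) * α - 1) * (-α * g₂))).ofReal_comp
  have hx := (hasDerivAt_id' l).ofReal_comp
  -- the exponent with Ξ frozen at its value at `l`
  have h := (((((hx.const_mul Complex.I).mul_const (y₀ : ℂ)).mul_const
      ((Real.exp (g₂ * t / ε) : ℝ) : ℂ)).sub
    (((hx.const_mul Complex.I).mul_const ((ε ^ γ * (g₁ / g₂) : ℝ) : ℂ)).mul_const
      (1 - ((Real.exp (g₂ * t / ε) : ℝ) : ℂ)))).sub
    ((hD.mul_const (Xi α β l)).mul_const (1 - ((Real.exp (α * g₂ * t / ε) : ℝ) : ℂ)))).cexp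
  refine (h.congr_of_eventuallyEq ?_).congr_deriv ?_
  · filter_upwards [Xi_eventuallyEq α β hl] with x hx
    simp only [psi, hx]
    rfl
  · simp only [psi, Pi.sub_apply]
    push_cast
    ring

end

theorem stmt_2_general (g₁ g₂ b y₀ ε γ α β : ℝ) (hg₂ : g₂ < 0) (hε : 0 < ε)
    (hα : α ∈ Set.Ioc (1 : ℝ) 2) :
    (∀ l : ℝ, l ≠ 0 → ∀ t : ℝ,
      deriv (fun s => psi g₁ g₂ b y₀ ε γ α β l s) t
        = ((g₂ * l / ε : ℝ) : ℂ) * deriv (fun l' => psi g₁ g₂ b y₀ ε γ α β l' t) l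
          + (Complex.I * ((g₁ * l * ε ^ (γ - 1) : ℝ) : ℂ)
              - ((b ^ α * |l| ^ α * ε ^ (-(1 - γ) * α) : ℝ) : ℂ) * Xi α β l)
            * psi g₁ g₂ b y₀ ε γ α β l t)
    ∧ ∀ l : ℝ, psi g₁ g₂ b y₀ ε γ α β l 0 = Complex.exp (Complex.I * l * y₀) := by
  refine ⟨fun l hl t => ?_, fun l => by simp [psi]⟩
  rw [(hasDerivAt_psi_time g₁ g₂ b y₀ ε γ α β l t).deriv,
    (hasDerivAt_psi_space g₁ g₂ b y₀ ε γ α β hl t).deriv]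
  have hg₂₀ : g₂ ≠ 0 := hg₂.ne
  have hα₀ : α ≠ 0 := by linarith [hα.1]
  set K := ε ^ γ * (g₁ / g₂) with hK
  set D := b ^ α * |l| ^ α / (ε ^ ((1 - γ) * α - 1) * (-α * g₂)) with hD
  have hdrift : K * (g₂ / ε) = g₁ * ε ^ (γ - 1) := by
    rw [hK, rpow_sub_one hε.ne']
    field_simp
  have hjump : α * g₂ / ε * D = -(b ^ α * |l| ^ α * ε ^ (-(1 - γ) * α)) := by
    rw [hD, neg_mul (1 - γ), rpow_neg hε.le, rpow_sub_one hε.ne']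
    field_simp
  have hEuler : l * (α * D / l) = α * D := mul_div_cancel₀ _ hl
  set F := Real.exp (α * g₂ * t / ε)
  set P := psi g₁ g₂ b y₀ ε γ α β l t
  apply_fun ((↑) : ℝ → ℂ) at hdrift hjump hEuler
  push_cast at hdrift hjump hEuler ⊢
  linear_combination (P * Complex.I * l) * hdrift + (P * Xi α β l) * hjump
    + (P * Xi α β l * g₂ / ε * (1 - F)) * hEuler

/-- The function ψ satisfies ∂ψ/∂t = (g₂ l/ε) ∂ψ/∂l
+ (i g₁ l ε^{γ-1} - b^α |l|^α ε^{-(1-γ)α} Ξ(l)) ψ with ψ(l,0) = exp(i l y₀),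
for all l ≠ 0. -/
theorem stmt_2 (g₁ g₂ b y₀ ε γ α β : ℝ) (hg₂ : g₂ < 0) (hε : 0 < ε)
    (hα : α ∈ Set.Ioc (1 : ℝ) 2) (hβ : β ∈ Set.Icc (-1 : ℝ) 1) :
    (∀ l : ℝ, l ≠ 0 → ∀ t : ℝ,
      deriv (fun s => psi g₁ g₂ b y₀ ε γ α β l s) t
        = ((g₂ * l / ε : ℝ) : ℂ) * deriv (fun l' => psi g₁ g₂ b y₀ ε γ α β l' t) l
          + (Complex.I * ((g₁ * l * ε ^ (γ - 1) : ℝ) : ℂ)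
              - ((b ^ α * |l| ^ α * ε ^ (-(1 - γ) * α) : ℝ) : ℂ) * Xi α β l)
            * psi g₁ g₂ b y₀ ε γ α β l t)
    ∧ ∀ l : ℝ, psi g₁ g₂ b y₀ ε γ α β l 0 = Complex.exp (Complex.I * l * y₀) :=
  stmt_2_general g₁ g₂ b y₀ ε γ α β hg₂ hε hα
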